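/- arXiv:2308.12589 — 2 statements merged into one kernel-verified Lean document; each statement's English description precedes it below -/
import Mathlib

section
/- Let 0 < ν ≤ 1, let k be a nonzero integer, η ∈ ℝ and t ≥ 0. Then ν·(k² + (η − kt)²) + ν^(1/3)/(1 + ν^(2/3)·(η/k − t)²) ≥ (1/4)·ν^(1/3). -/
theorem stmt_3 (ν : ℝ) (hν : 0 < ν) (hν1 : ν ≤ 1) (k : ℤ) (hk : k ≠ 0)
    (η t : ℝ) (ht : 0 ≤ t) :
    ν * ((k : ℝ)^2 + (η - k * t)^2) +
      ν ^ ((1:ℝ)/3) / (1 + ν ^ ((2:ℝ)/3) * (η / k - t)^2) ≥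
      (1/4) * ν ^ ((1:ℝ)/3) := by
  have hk' : (k : ℝ) ≠ 0 := Int.cast_ne_zero.mpr hk
  have hA : 0 < ν ^ ((1:ℝ)/3) := Real.rpow_pos_of_pos hν _
  have hB : 0 < ν ^ ((2:ℝ)/3) := Real.rpow_pos_of_pos hν _
  have hx : 0 ≤ ν ^ ((2:ℝ)/3) * (η / k - t)^2 :=
    mul_nonneg hB.le (sq_nonneg _)
  have hfirst : 0 ≤ ν * ((k : ℝ)^2 + (η - k * t)^2) :=
    mul_nonneg hν.le (add_nonneg (sq_nonneg _) (sq_nonneg _))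
  by_cases h : ν ^ ((2:ℝ)/3) * (η / k - t)^2 ≤ 1
  · have hden : (0:ℝ) < 1 + ν ^ ((2:ℝ)/3) * (η / k - t)^2 := by linarith
    have h2 : ν ^ ((1:ℝ)/3) / (1 + ν ^ ((2:ℝ)/3) * (η / k - t)^2) ≥
        ν ^ ((1:ℝ)/3) / 2 :=
      div_le_div_of_nonneg_left hA.le hden (by linarith)
    nlinarith
  · push_neg at h
    have hsq : (η / k - t)^2 > (ν ^ ((2:ℝ)/3))⁻¹ := by
      rw [gt_iff_lt, inv_lt_iff_one_lt_mul₀' hB]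
      linarith [h]
    have hkey : ν * (η - k * t)^2 ≥ ν ^ ((1:ℝ)/3) := by
      have heq : (η - k * t) = k * (η / k - t) := by field_simp
      have hk2 : (1:ℝ) ≤ (k:ℝ)^2 := by
        have : (1:ℝ) ≤ |(k:ℝ)| := by
          rw [← Int.cast_abs]
          exact_mod_cast Int.one_le_abs hk
        nlinarith [abs_nonneg (k:ℝ), sq_abs (k:ℝ)]
      have hνinv : ν * (ν ^ ((2:ℝ)/3))⁻¹ = ν ^ ((1:ℝ)/3) := by
        rw [← Real.rpow_neg hν.le]
        nth_rewrite 1 [← Real.rpow_one ν]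
        rw [← Real.rpow_add hν]
        norm_num
      calc ν * (η - k * t)^2 = ν * ((k:ℝ)^2 * (η / k - t)^2) := by
            rw [heq]; ring
        _ ≥ ν * (1 * (ν ^ ((2:ℝ)/3))⁻¹) := by
            apply mul_le_mul_of_nonneg_left _ hν.le
            apply mul_le_mul hk2 hsq.le (by positivity) (by positivity)
        _ = ν ^ ((1:ℝ)/3) := by rw [one_mul, hνinv]
    have hpos2 : 0 ≤ ν ^ ((1:ℝ)/3) / (1 + ν ^ ((2:ℝ)/3) * (η / k - t)^2) := by
      apply div_nonneg hA.le; linarith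
    nlinarith [mul_nonneg hν.le (sq_nonneg (k:ℝ))]
end

section
/- For every nonzero integer k, every real η and every t ≥ 0, one has 1/(|k|·√(k² + (η − kt)²)) ≤ √2 · √(1 + k² + η²)/√(1 + t²). -/
theorem stmt_10 (k : ℤ) (hk : k ≠ 0) (η t : ℝ) (ht : 0 ≤ t) :
    1 / (|(k : ℝ)| * Real.sqrt ((k : ℝ)^2 + (η - k * t)^2)) ≤
      Real.sqrt 2 * Real.sqrt (1 + (k : ℝ)^2 + η^2) / Real.sqrt (1 + t^2) := by
  have hk1 : (1:ℝ) ≤ (k:ℝ)^2 := by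
    have h := Int.one_le_abs (by simpa using hk)
    have : (1:ℝ) ≤ |(k:ℝ)| := by exact_mod_cast (by simpa using h)
    nlinarith [abs_nonneg (k:ℝ), sq_abs (k:ℝ)]
  have hkpos : (0:ℝ) < |(k:ℝ)| := by positivity
  have hp : (0:ℝ) < (k:ℝ)^2 + (η - k * t)^2 := by nlinarith [sq_nonneg (η - k*t)]
  have hA : (0:ℝ) < |(k:ℝ)| * Real.sqrt ((k : ℝ)^2 + (η - k * t)^2) := by
    exact mul_pos hkpos (Real.sqrt_pos.mpr hp)
  have hT : (0:ℝ) < Real.sqrt (1 + t^2) := Real.sqrt_pos.mpr (by positivity)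
  rw [div_le_div_iff₀ hA hT, one_mul]
  have habs : |(k:ℝ)| = Real.sqrt ((k:ℝ)^2) := (Real.sqrt_sq_eq_abs _).symm
  have key : 1 + t^2 ≤ 2 * (1 + (k:ℝ)^2 + η^2) * ((k:ℝ)^2 * ((k:ℝ)^2 + (η - k*t)^2)) := by
    have h1 : t^2 ≤ 2*η^2 + 2*(η-(k:ℝ)*t)^2 := by
      nlinarith [sq_nonneg (2*η - (k:ℝ)*t), mul_nonneg (sub_nonneg.mpr hk1) (sq_nonneg t)]
    have h2 : (1:ℝ) + (η-(k:ℝ)*t)^2 ≤ (k:ℝ)^2 * ((k:ℝ)^2 + (η-(k:ℝ)*t)^2) := by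
      nlinarith [mul_nonneg (sub_nonneg.mpr hk1) (sq_nonneg (η-(k:ℝ)*t)), sq_nonneg ((k:ℝ)^2 - 1)]
    have h3 : 2*(1+η^2)*(1+(η-(k:ℝ)*t)^2) ≤ 2 * (1 + (k:ℝ)^2 + η^2) * ((k:ℝ)^2 * ((k:ℝ)^2 + (η-(k:ℝ)*t)^2)) := by
      have := mul_le_mul (by nlinarith : (2:ℝ)*(1+η^2) ≤ 2*(1+(k:ℝ)^2+η^2)) h2
        (by positivity) (by positivity)
      linarith
    nlinarith [mul_nonneg (sq_nonneg η) (sq_nonneg (η-(k:ℝ)*t))]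
  calc Real.sqrt (1 + t^2)
      ≤ Real.sqrt (2 * (1 + (k:ℝ)^2 + η^2) * ((k:ℝ)^2 * ((k:ℝ)^2 + (η - k*t)^2))) :=
        Real.sqrt_le_sqrt key
    _ = Real.sqrt 2 * Real.sqrt (1 + (k:ℝ)^2 + η^2) *
        (|(k:ℝ)| * Real.sqrt ((k:ℝ)^2 + (η - k*t)^2)) := by
        rw [habs, Real.sqrt_mul (by positivity : (0:ℝ) ≤ 2 * (1 + (k:ℝ)^2 + η^2)),
          Real.sqrt_mul (by norm_num : (0:ℝ) ≤ 2),
          Real.sqrt_mul (sq_nonneg (k:ℝ))]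
end
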